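/- arXiv:2201.09105 — 3 statements merged into one kernel-verified Lean document; each statement's English description precedes it below -/
import Mathlib

section
/- Let r, λ ≥ 0 be constants, c : [0,T] → ℝ continuous, φ ∈ ℝ, and f : ℝ → ℝ nondecreasing, 1-Lipschitz, with f(y) ≤ y for all y. Let U(t) = ∫ₜ^T c(s) e^{-r(s-t)} ds + e^{-r(T-t)} φ be the risk-free value and let V be the unique continuous solution of V(t) = ∫ₜ^T (c(s) + λ f(V(s))) e^{-(r+λ)(s-t)} ds + e^{-(r+λ)(T-t)} φ. Then V(t) ≤ U(t) for all t ∈ [0,T]. -/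
open intervalIntegral Real Set

lemma stmt10_cont_exp (b t0 : ℝ) : Continuous fun s : ℝ => Real.exp (-b*(s-t0)) := by
  continuity

lemma stmt10_exp_deriv (b t : ℝ) :
    HasDerivAt (fun u : ℝ => Real.exp (b*u)) (b * Real.exp (b*t)) t := by
  have h1 : HasDerivAt (fun u : ℝ => b*u) b t := by
    simpa using (hasDerivAt_id t).const_mul b
  simpa [mul_comm] using h1.exp

-- derivative of t ↦ exp(a t) * (∫ₜ^T g(s) e^{-a s} ds + K)
lemma stmt10_aux_deriv (g : ℝ → ℝ) (hg : Continuous g) (T a K : ℝ) (t : ℝ) :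
    HasDerivAt (fun t => Real.exp (a*t) * ((∫ s in t..T, g s * Real.exp (-a*s)) + K))
      (a * (Real.exp (a*t) * ((∫ s in t..T, g s * Real.exp (-a*s)) + K)) - g t) t := by
  have hgc : Continuous (fun s => g s * Real.exp (-a*s)) := by continuity
  have h2 : HasDerivAt (fun u => ∫ s in T..u, g s * Real.exp (-a*s))
      (g t * Real.exp (-a*t)) t :=
    intervalIntegral.integral_hasDerivAt_right (hgc.intervalIntegrable _ _)
      (hgc.stronglyMeasurableAtFilter _ _) hgc.continuousAt
  have h1 : HasDerivAt (fun u => ∫ s in u..T, g s * Real.exp (-a*s))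
      (-(g t * Real.exp (-a*t))) t := by
    have := h2.neg
    refine this.congr_of_eventuallyEq (Filter.Eventually.of_forall fun u => ?_)
    exact intervalIntegral.integral_symm T u
  have he : HasDerivAt (fun u => Real.exp (a*u)) (a * Real.exp (a*t)) t :=
    stmt10_exp_deriv a t
  have hprod := he.mul (h1.add_const K)
  have key : Real.exp (a*t) * Real.exp (-a*t) = 1 := by
    rw [← Real.exp_add]
    convert Real.exp_zero using 2
    ring
  refine hprod.congr_deriv ?_
  linear_combination -(g t) * key

lemma stmt10_form (T a φ : ℝ) (g : ℝ → ℝ) (t : ℝ) :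
    Real.exp (a*t) * ((∫ s in t..T, g s * Real.exp (-a*s)) + Real.exp (-a*T) * φ)
      = (∫ s in t..T, g s * Real.exp (-a*(s-t))) + Real.exp (-a*(T-t)) * φ := by
  rw [mul_add, ← intervalIntegral.integral_const_mul]
  congr 1
  · apply intervalIntegral.integral_congr
    intro s hs
    have h : Real.exp (a*t) * Real.exp (-a*s) = Real.exp (-a*(s-t)) := by
      rw [← Real.exp_add]; congr 1; ring
    dsimp
    linear_combination g s * h
  · have h : Real.exp (a*t) * Real.exp (-a*T) = Real.exp (-a*(T-t)) := by
      rw [← Real.exp_add]; congr 1; ring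
    linear_combination φ * h

theorem stmt_10 (T r lam : ℝ) (hT : 0 ≤ T) (hr : 0 ≤ r) (hlam : 0 ≤ lam)
    (c : ℝ → ℝ) (hc : Continuous c) (φ : ℝ)
    (f : ℝ → ℝ) (hmono : Monotone f) (hf : LipschitzWith 1 f) (hle : ∀ y : ℝ, f y ≤ y)
    (U V : ℝ → ℝ)
    (hU : ∀ t ∈ Icc (0:ℝ) T,
      U t = (∫ s in t..T, c s * Real.exp (-r * (s - t))) + Real.exp (-r * (T - t)) * φ)
    (hVcont : ContinuousOn V (Icc 0 T))
    (hV : ∀ t ∈ Icc (0:ℝ) T,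
      V t = (∫ s in t..T, (c s + lam * f (V s)) * Real.exp (-(r + lam) * (s - t)))
          + Real.exp (-(r + lam) * (T - t)) * φ) :
    ∀ t ∈ Icc (0:ℝ) T, V t ≤ U t := by
  set μ : ℝ := r + lam with hμ
  set Uex : ℝ → ℝ := fun t =>
    Real.exp (r*t) * ((∫ s in t..T, c s * Real.exp (-r*s)) + Real.exp (-r*T) * φ) with hUexdef
  have hUd : ∀ t, HasDerivAt Uex (r * Uex t - c t) t := fun t =>
    stmt10_aux_deriv c hc T r _ t
  have hUexc : Continuous Uex := continuous_iff_continuousAt.mpr fun t => (hUd t).continuousAt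
  -- U = Uex on Icc
  have hUeq : ∀ t ∈ Icc (0:ℝ) T, U t = Uex t := by
    intro t ht
    rw [hU t ht, hUexdef]
    exact (stmt10_form T r φ c t).symm
  -- the modified source
  set gW : ℝ → ℝ := fun s => c s + lam * Uex s with hgWdef
  have hgWc : Continuous gW := hc.add (continuous_const.mul hUexc)
  set W : ℝ → ℝ := fun t =>
    Real.exp (μ*t) * ((∫ s in t..T, gW s * Real.exp (-μ*s)) + Real.exp (-μ*T) * φ) with hWdef
  have hWd : ∀ t, HasDerivAt W (μ * W t - gW t) t := fun t =>
    stmt10_aux_deriv gW hgWc T μ _ t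
  -- G := W - Uex satisfies G' = μ G, G(T) = 0, hence G ≡ 0
  have hGd : ∀ t, HasDerivAt (fun u => W u - Uex u) (μ * (W t - Uex t)) t := by
    intro t
    have := (hWd t).sub (hUd t)
    refine this.congr_deriv ?_
    rw [hμ, hgWdef]
    ring
  have hHd : ∀ t, HasDerivAt (fun u => Real.exp (-μ*u) * (W u - Uex u)) 0 t := by
    intro t
    have he : HasDerivAt (fun u => Real.exp (-μ*u)) (-μ * Real.exp (-μ*t)) t :=
      stmt10_exp_deriv (-μ) t
    have := he.mul (hGd t)
    refine this.congr_deriv ?_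
    ring
  have hexpT : ∀ a : ℝ, Real.exp (a*T) * Real.exp (-a*T) = 1 := by
    intro a; rw [← Real.exp_add]; convert Real.exp_zero using 2; ring
  have hUexT : Uex T = φ := by
    rw [hUexdef]; simp only [intervalIntegral.integral_same, zero_add, ← mul_assoc]
    rw [hexpT r, one_mul]
  have hWT : W T = φ := by
    rw [hWdef]; simp only [intervalIntegral.integral_same, zero_add, ← mul_assoc]
    rw [hexpT μ, one_mul]
  have hconst : ∀ t : ℝ, Real.exp (-μ*t) * (W t - Uex t)
      = Real.exp (-μ*T) * (W T - Uex T) :=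
    fun t => is_const_of_deriv_eq_zero
      (fun x => (hHd x).differentiableAt) (fun x => (hHd x).deriv) t T
  have hWU : ∀ t : ℝ, W t = Uex t := by
    intro t
    have h := hconst t
    rw [hWT, hUexT, sub_self, mul_zero] at h
    have hne : Real.exp (-μ*t) ≠ 0 := (Real.exp_pos _).ne'
    rcases mul_eq_zero.mp h with h' | h'
    · exact absurd h' hne
    · linarith [sub_eq_zero.mp h']
  -- key integral identity for Uex
  have hUid : ∀ t : ℝ, Uex t
      = (∫ s in t..T, (c s + lam * Uex s) * Real.exp (-μ*(s-t)))
        + Real.exp (-μ*(T-t)) * φ := by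
    intro t
    rw [← hWU t, hWdef]
    exact stmt10_form T μ φ gW t
  -- the difference identity on Icc
  have hfc : Continuous f := hf.continuous
  have key : ∀ t ∈ Icc (0:ℝ) T, Uex t - V t
      = ∫ s in t..T, lam * (Uex s - f (V s)) * Real.exp (-μ*(s-t)) := by
    intro t ht
    have hsub : uIcc t T ⊆ Icc (0:ℝ) T := by
      rw [uIcc_of_le ht.2]
      exact Icc_subset_Icc ht.1 le_rfl
    have hintA : IntervalIntegrable (fun s => (c s + lam * Uex s) * Real.exp (-μ*(s-t)))
        MeasureTheory.volume t T :=
      (hgWc.mul (stmt10_cont_exp μ t)).intervalIntegrable _ _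
    have hVcont' : ContinuousOn (fun s => f (V s)) (uIcc t T) :=
      hfc.comp_continuousOn (hVcont.mono hsub)
    have hintB : IntervalIntegrable (fun s => (c s + lam * f (V s)) * Real.exp (-μ*(s-t)))
        MeasureTheory.volume t T := by
      apply ContinuousOn.intervalIntegrable
      exact (hc.continuousOn.add (continuousOn_const.mul hVcont')).mul
        (stmt10_cont_exp μ t).continuousOn
    have hVt := hV t ht
    have hdiff : Uex t - V t = (∫ s in t..T, (c s + lam * Uex s) * Real.exp (-μ*(s-t)))
        - ∫ s in t..T, (c s + lam * f (V s)) * Real.exp (-μ*(s-t)) := by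
      rw [hUid t, hVt, hμ]; ring
    rw [hdiff, ← intervalIntegral.integral_sub hintA hintB]
    apply intervalIntegral.integral_congr
    intro s hs
    dsimp
    ring
  -- minimum of D := Uex - V on Icc
  have hDcont : ContinuousOn (fun t => Uex t - V t) (Icc (0:ℝ) T) :=
    hUexc.continuousOn.sub hVcont
  obtain ⟨t0, ht0, hmin⟩ := isCompact_Icc.exists_isMinOn (nonempty_Icc.mpr hT) hDcont
  have hmin' : ∀ x ∈ Icc (0:ℝ) T, Uex t0 - V t0 ≤ Uex x - V x := fun x hx => hmin hx
  suffices h0 : 0 ≤ Uex t0 - V t0 by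
    intro t ht
    rw [hUeq t ht]
    linarith [hmin' t ht]
  by_contra hneg
  push_neg at hneg
  set m : ℝ := Uex t0 - V t0 with hm
  rcases eq_or_lt_of_le hlam with hlam0 | hlampos
  · -- lam = 0
    have hm0 : m = 0 := by
      rw [hm, key t0 ht0, ← hlam0]
      simp
    linarith
  · -- lam > 0
    have hμpos : 0 < μ := by rw [hμ]; linarith
    have ht0T : t0 ≤ T := ht0.2
    have hJ : (∫ s in t0..T, Real.exp (-μ*(s-t0)))
        = (1 - Real.exp (-μ*(T-t0))) / μ := by
      have hF : ∀ s ∈ uIcc t0 T, HasDerivAt (fun u => -(1/μ) * Real.exp (-μ*(u-t0)))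
          (Real.exp (-μ*(s-t0))) s := by
        intro s hs
        have h1 : HasDerivAt (fun u : ℝ => -μ*(u-t0)) (-μ) s := by
          simpa using ((hasDerivAt_id s).sub_const t0).const_mul (-μ)
        have h2 := h1.exp
        have h3 := h2.const_mul (-(1/μ))
        refine h3.congr_deriv ?_
        field_simp
      have hint : IntervalIntegrable (fun s => Real.exp (-μ*(s-t0)))
          MeasureTheory.volume t0 T := (stmt10_cont_exp μ t0).intervalIntegrable _ _
      rw [intervalIntegral.integral_eq_sub_of_hasDerivAt hF hint]
      have hz : (-μ : ℝ)*(t0-t0) = 0 := by ring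
      rw [hz, Real.exp_zero]
      field_simp
      ring
    set J : ℝ := ∫ s in t0..T, Real.exp (-μ*(s-t0)) with hJdef
    have hlamJ : lam * J < 1 := by
      rw [hJ]
      have hE : 0 < Real.exp (-μ*(T-t0)) := Real.exp_pos _
      rw [show lam * ((1 - Real.exp (-μ*(T-t0))) / μ) = (lam * (1 - Real.exp (-μ*(T-t0)))) / μ
        from by ring, div_lt_one hμpos]
      nlinarith
    have hineq : lam * m * J ≤ m := by
      have hsub : uIcc t0 T ⊆ Icc (0:ℝ) T := by
        rw [uIcc_of_le ht0T]; exact Icc_subset_Icc ht0.1 le_rfl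
      have hintUp : IntervalIntegrable (fun s => lam * (Uex s - f (V s)) * Real.exp (-μ*(s-t0)))
          MeasureTheory.volume t0 T := by
        apply ContinuousOn.intervalIntegrable
        exact ((continuousOn_const.mul (hUexc.continuousOn.sub
          (hfc.comp_continuousOn (hVcont.mono hsub)))).mul (stmt10_cont_exp μ t0).continuousOn)
      have hintLo : IntervalIntegrable (fun s => lam * m * Real.exp (-μ*(s-t0)))
          MeasureTheory.volume t0 T :=
        ((continuous_const.mul (stmt10_cont_exp μ t0)).intervalIntegrable _ _)
      have hmono2 : ∀ s ∈ Icc t0 T,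
          lam * m * Real.exp (-μ*(s-t0)) ≤ lam * (Uex s - f (V s)) * Real.exp (-μ*(s-t0)) := by
        intro s hs
        have hsI : s ∈ Icc (0:ℝ) T := ⟨le_trans ht0.1 hs.1, hs.2⟩
        have h1 : m ≤ Uex s - V s := hmin' s hsI
        have h2 : f (V s) ≤ V s := hle _
        have hE : 0 < Real.exp (-μ*(s-t0)) := Real.exp_pos _
        have h3 : m ≤ Uex s - f (V s) := by linarith
        exact mul_le_mul_of_nonneg_right (mul_le_mul_of_nonneg_left h3 hlam) hE.le
      have hmono3 := intervalIntegral.integral_mono_on ht0T hintLo hintUp hmono2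
      rw [intervalIntegral.integral_const_mul] at hmono3
      calc lam * m * J = lam * m * ∫ s in t0..T, Real.exp (-μ*(s-t0)) := by rw [hJdef]
        _ ≤ ∫ s in t0..T, lam * (Uex s - f (V s)) * Real.exp (-μ*(s-t0)) := hmono3
        _ = m := (key t0 ht0).symm
    nlinarith [mul_pos (neg_pos.mpr hneg) (sub_pos.mpr hlamJ)]
end

section
/- Let r, λ ≥ 0 be constants, c : [0,T] → ℝ continuous, φ ∈ ℝ, and f : ℝ → ℝ nondecreasing, 1-Lipschitz, with f(y) ≤ y. Define U(t) = ∫ₜ^T c(s) e^{-r(s-t)} ds + e^{-r(T-t)} φ, V₀(t) = ∫ₜ^T (c(s) + λ f(U(s))) e^{-(r+λ)(s-t)} ds + e^{-(r+λ)(T-t)} φ (risk-free closeout), and let V be the unique continuous solution of V(t) = ∫ₜ^T (c(s) + λ f(V(s))) e^{-(r+λ)(s-t)} ds + e^{-(r+λ)(T-t)} φ (replacement closeout). Then V(t) ≤ V₀(t) for all t ∈ [0,T], equivalently, the CVA with replacement closeout Π = U − V dominates the CVA with risk-free closeout Π₀ = U − V₀. -/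
open intervalIntegral Real Set

private lemma shift_exp (g : ℝ → ℝ) (k t T : ℝ) :
    (∫ s in t..T, g s * Real.exp (-k * (s - t)))
      = (∫ s in t..T, g s * Real.exp (-k * s)) * Real.exp (k * t) := by
  rw [← intervalIntegral.integral_mul_const]
  apply intervalIntegral.integral_congr
  intro s _
  simp only [mul_assoc, ← Real.exp_add]
  congr 2
  ring

theorem stmt_11 (T r lam : ℝ) (hT : 0 ≤ T) (hr : 0 ≤ r) (hlam : 0 ≤ lam)
    (c : ℝ → ℝ) (hc : Continuous c) (φ : ℝ)
    (f : ℝ → ℝ) (hmono : Monotone f) (hf : LipschitzWith 1 f) (hle : ∀ y : ℝ, f y ≤ y)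
    (U V₀ V : ℝ → ℝ)
    (hU : ∀ t ∈ Icc (0:ℝ) T,
      U t = (∫ s in t..T, c s * Real.exp (-r * (s - t))) + Real.exp (-r * (T - t)) * φ)
    (hV₀ : ∀ t ∈ Icc (0:ℝ) T,
      V₀ t = (∫ s in t..T, (c s + lam * f (U s)) * Real.exp (-(r + lam) * (s - t)))
          + Real.exp (-(r + lam) * (T - t)) * φ)
    (hVcont : ContinuousOn V (Icc 0 T))
    (hV : ∀ t ∈ Icc (0:ℝ) T,
      V t = (∫ s in t..T, (c s + lam * f (V s)) * Real.exp (-(r + lam) * (s - t)))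
          + Real.exp (-(r + lam) * (T - t)) * φ) :
    ∀ t ∈ Icc (0:ℝ) T, V t ≤ V₀ t := by
  -- global extension of U
  set u : ℝ → ℝ := fun t =>
    (∫ s in t..T, c s * Real.exp (-r * s)) * Real.exp (r * t)
      + Real.exp (-r * (T - t)) * φ with hu_def
  have hce : Continuous fun s => c s * Real.exp (-r * s) := by
    exact hc.mul (Real.continuous_exp.comp (continuous_const.mul continuous_id))
  -- derivative of the primitive
  have hA : ∀ t : ℝ, HasDerivAt (fun x => ∫ s in x..T, c s * Real.exp (-r * s))
      (-(c t * Real.exp (-r * t))) t := fun t =>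
    intervalIntegral.integral_hasDerivAt_left (hce.intervalIntegrable t T)
      (hce.stronglyMeasurableAtFilter _ _) hce.continuousAt
  -- derivative of u
  have hu' : ∀ t : ℝ, HasDerivAt u (r * u t - c t) t := by
    intro t
    have hE : HasDerivAt (fun x : ℝ => Real.exp (r * x)) (Real.exp (r * t) * r) t := by
      simpa using (HasDerivAt.exp ((hasDerivAt_id t).const_mul r))
    have h1 := (hA t).mul hE
    have hin : HasDerivAt (fun x : ℝ => -r * (T - x)) r t := by
      simpa using ((hasDerivAt_const t T).sub (hasDerivAt_id t)).const_mul (-r)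
    have h2 : HasDerivAt (fun x : ℝ => Real.exp (-r * (T - x)) * φ)
        (Real.exp (-r * (T - t)) * r * φ) t := by
      simpa [mul_comm] using (HasDerivAt.exp hin).mul_const φ
    have h3 := h1.add h2
    have e1 : Real.exp (-r * t) * Real.exp (r * t) = 1 := by
      rw [← Real.exp_add]; norm_num
    refine h3.congr_deriv (Eq.symm ?_)
    simp only [hu_def]
    set A := ∫ s in t..T, c s * Real.exp (-r * s)
    linear_combination (c t) * e1
  have hudiff : Differentiable ℝ u := fun t => (hu' t).differentiableAt
  have hu_cont : Continuous u := hudiff.continuous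
  -- u agrees with U on [0,T]
  have hUeq : ∀ t ∈ Icc (0:ℝ) T, U t = u t := by
    intro t ht
    rw [hU t ht, hu_def]
    rw [shift_exp c r t T]
  -- kernel for the (r+lam) representation
  set g : ℝ → ℝ := fun s => (c s + lam * u s) * Real.exp (-(r + lam) * s) with hg_def
  have hg_cont : Continuous g := by
    exact (hc.add (continuous_const.mul hu_cont)).mul
      (Real.continuous_exp.comp (continuous_const.mul continuous_id))
  -- constancy argument
  have hkey : ∀ t : ℝ, Real.exp (-(r + lam) * t) * u t
      = (∫ s in t..T, g s) + Real.exp (-(r + lam) * T) * φ := by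
    set G : ℝ → ℝ := fun x => Real.exp (-(r + lam) * x) * u x - ∫ s in x..T, g s with hG_def
    have hG' : ∀ x : ℝ, HasDerivAt G 0 x := by
      intro x
      have d1 : HasDerivAt (fun y : ℝ => Real.exp (-(r + lam) * y))
          (Real.exp (-(r + lam) * x) * (-(r + lam))) x := by
        simpa using (HasDerivAt.exp ((hasDerivAt_id x).const_mul (-(r + lam))))
      have d2 := (d1.mul (hu' x)).sub
        (intervalIntegral.integral_hasDerivAt_left (hg_cont.intervalIntegrable x T)
          (hg_cont.stronglyMeasurableAtFilter _ _) hg_cont.continuousAt)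
      refine d2.congr_deriv (Eq.symm ?_)
      simp only [hg_def]
      ring
    have hconst : ∀ x : ℝ, G x = G T :=
      fun x => is_const_of_deriv_eq_zero (fun y => (hG' y).differentiableAt)
        (fun y => (hG' y).deriv) x T
    intro t
    have h2 : G T = Real.exp (-(r + lam) * T) * φ := by
      simp only [hG_def, intervalIntegral.integral_same, sub_zero, hu_def,
        intervalIntegral.integral_same, zero_mul]
      simp
    have h1 := hconst t
    rw [h2] at h1
    simp only [hG_def] at h1
    linarith [h1]
  -- u satisfies the (r+lam) fixed point equation
  have hurep : ∀ t : ℝ, u t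
      = (∫ s in t..T, (c s + lam * u s) * Real.exp (-(r + lam) * (s - t)))
        + Real.exp (-(r + lam) * (T - t)) * φ := by
    intro t
    rw [shift_exp (fun s => c s + lam * u s) (r + lam) t T]
    have h := hkey t
    have e1 : Real.exp (-(r + lam) * t) * Real.exp ((r + lam) * t) = 1 := by
      rw [← Real.exp_add, show -(r + lam) * t + (r + lam) * t = 0 by ring, Real.exp_zero]
    have e2 : Real.exp (-(r + lam) * T) * Real.exp ((r + lam) * t)
        = Real.exp (-(r + lam) * (T - t)) := by
      rw [← Real.exp_add]; congr 1; ring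
    have := congrArg (fun z => z * Real.exp ((r + lam) * t)) h
    simp only [hg_def] at this
    linear_combination this - u t * e1 + φ * e2
  -- positive part of V - u
  set p : ℝ → ℝ := fun s => max (V s - u s) 0 with hp_def
  have hp_nonneg : ∀ s, 0 ≤ p s := fun s => le_max_right _ _
  have hp_cont : ContinuousOn p (Icc 0 T) :=
    (hVcont.sub hu_cont.continuousOn).sup continuousOn_const
  obtain ⟨x₀, hx₀mem, hx₀max⟩ :=
    isCompact_Icc.exists_isMaxOn (nonempty_Icc.mpr hT) hp_cont
  set M := p x₀ with hM_def
  have hM0 : 0 ≤ M := hp_nonneg x₀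
  -- subset fact
  have hsub : ∀ t ∈ Icc (0:ℝ) T, Icc t T ⊆ Icc (0:ℝ) T :=
    fun t ht => Icc_subset_Icc ht.1 le_rfl
  have huIcc : ∀ t ∈ Icc (0:ℝ) T, uIcc t T = Icc t T := fun t ht => uIcc_of_le ht.2
  -- continuity facts on Icc 0 T
  have hfV_cont : ContinuousOn (fun s => f (V s)) (Icc 0 T) :=
    hf.continuous.comp_continuousOn hVcont
  -- key integral inequality
  have hstep : ∀ t ∈ Icc (0:ℝ) T, V t - u t ≤ lam * ∫ s in t..T, p s := by
    intro t ht
    have hIp : IntervalIntegrable p MeasureTheory.volume t T :=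
      (hp_cont.mono (by rw [huIcc t ht]; exact hsub t ht)).intervalIntegrable
    have hI1 : IntervalIntegrable
        (fun s => (c s + lam * f (V s)) * Real.exp (-(r + lam) * (s - t)))
        MeasureTheory.volume t T := by
      apply ContinuousOn.intervalIntegrable
      apply ContinuousOn.mul
      · exact (hc.continuousOn.add (continuousOn_const.mul
          (hfV_cont.mono (by rw [huIcc t ht]; exact hsub t ht)))).congr (fun x hx => rfl)
      · exact (Real.continuous_exp.comp
          (continuous_const.mul (continuous_id.sub continuous_const))).continuousOn
    have hI2 : IntervalIntegrable
        (fun s => (c s + lam * u s) * Real.exp (-(r + lam) * (s - t)))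
        MeasureTheory.volume t T := by
      apply Continuous.intervalIntegrable
      exact (hc.add (continuous_const.mul hu_cont)).mul
        (Real.continuous_exp.comp (continuous_const.mul (continuous_id.sub continuous_const)))
    have hdiff : V t - u t
        = ∫ s in t..T, ((c s + lam * f (V s)) * Real.exp (-(r + lam) * (s - t))
            - (c s + lam * u s) * Real.exp (-(r + lam) * (s - t))) := by
      rw [hV t ht, hurep t, intervalIntegral.integral_sub hI1 hI2]
      ring
    rw [hdiff]
    have hmul : (∫ s in t..T, lam * p s) = lam * ∫ s in t..T, p s :=
      intervalIntegral.integral_const_mul lam p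
    rw [← hmul]
    apply intervalIntegral.integral_mono_on ht.2 (hI1.sub hI2)
      (hIp.const_mul lam)
    intro x hx
    have hxmem : x ∈ Icc (0:ℝ) T := hsub t ht hx
    have hE1 : Real.exp (-(r + lam) * (x - t)) ≤ 1 := by
      rw [Real.exp_le_one_iff]
      have : 0 ≤ x - t := by linarith [hx.1]
      nlinarith
    have hE0 : 0 ≤ Real.exp (-(r + lam) * (x - t)) := (Real.exp_pos _).le
    have ha : lam * (f (V x) - u x) ≤ lam * p x := by
      apply mul_le_mul_of_nonneg_left _ hlam
      calc f (V x) - u x ≤ V x - u x := by linarith [hle (V x)]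
        _ ≤ p x := le_max_left _ _
    calc (c x + lam * f (V x)) * Real.exp (-(r + lam) * (x - t))
          - (c x + lam * u x) * Real.exp (-(r + lam) * (x - t))
        = (lam * (f (V x) - u x)) * Real.exp (-(r + lam) * (x - t)) := by ring
      _ ≤ (lam * p x) * Real.exp (-(r + lam) * (x - t)) :=
          mul_le_mul_of_nonneg_right ha hE0
      _ ≤ (lam * p x) * 1 :=
          mul_le_mul_of_nonneg_left hE1 (mul_nonneg hlam (hp_nonneg x))
      _ = lam * p x := by ring
  have hpstep : ∀ t ∈ Icc (0:ℝ) T, p t ≤ lam * ∫ s in t..T, p s := by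
    intro t ht
    refine max_le (hstep t ht) ?_
    apply mul_nonneg hlam
    apply intervalIntegral.integral_nonneg ht.2
    exact fun x _ => hp_nonneg x
  -- Gronwall iteration
  have hiter : ∀ n : ℕ, ∀ t ∈ Icc (0:ℝ) T,
      p t ≤ M * (lam * (T - t)) ^ n / n.factorial := by
    intro n
    induction n with
    | zero => intro t ht; simpa using hx₀max ht
    | succ n ih =>
      intro t ht
      have hIp : IntervalIntegrable p MeasureTheory.volume t T :=
        (hp_cont.mono (by rw [huIcc t ht]; exact hsub t ht)).intervalIntegrable
      have hIq : IntervalIntegrable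
          (fun s => M * (lam * (T - s)) ^ n / n.factorial) MeasureTheory.volume t T := by
        apply Continuous.intervalIntegrable
        fun_prop
      have h1 : (∫ s in t..T, p s)
          ≤ ∫ s in t..T, M * (lam * (T - s)) ^ n / n.factorial := by
        apply intervalIntegral.integral_mono_on ht.2 hIp hIq
        intro x hx
        exact ih x (hsub t ht hx)
      have hTt : (∫ s in t..T, (T - s) ^ n) = (T - t) ^ (n + 1) / (n + 1) := by
        rw [intervalIntegral.integral_comp_sub_left (fun x => x ^ n) T]
        simp [integral_pow]
      have h2 : (∫ s in t..T, M * (lam * (T - s)) ^ n / n.factorial)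
          = (M * lam ^ n / n.factorial) * ((T - t) ^ (n + 1) / (n + 1)) := by
        rw [← hTt, ← intervalIntegral.integral_const_mul]
        apply intervalIntegral.integral_congr
        intro x _
        simp [mul_pow]
        ring
      have hfac : ((n + 1).factorial : ℝ) = (n + 1) * n.factorial := by
        rw [Nat.factorial_succ]; push_cast; ring
      have hfn : (0:ℝ) < n.factorial := by positivity
      have hfn1 : (0:ℝ) < (n:ℝ) + 1 := by positivity
      calc p t ≤ lam * ∫ s in t..T, p s := hpstep t ht
        _ ≤ lam * ((M * lam ^ n / n.factorial) * ((T - t) ^ (n + 1) / (n + 1))) := by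
            rw [← h2]; exact mul_le_mul_of_nonneg_left h1 hlam
        _ = M * (lam * (T - t)) ^ (n + 1) / (n + 1).factorial := by
            rw [hfac, mul_pow]
            field_simp
            ring
  -- conclude p = 0, i.e. V ≤ u on [0,T]
  have hVleu : ∀ t ∈ Icc (0:ℝ) T, V t ≤ u t := by
    intro t ht
    have hlim : Filter.Tendsto (fun n : ℕ => M * (lam * (T - t)) ^ n / n.factorial)
        Filter.atTop (nhds 0) := by
      have := (FloorSemiring.tendsto_pow_div_factorial_atTop (lam * (T - t))).const_mul M
      simpa [mul_div_assoc] using this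
    have hp0 : p t ≤ 0 := ge_of_tendsto' hlim (fun n => hiter n t ht)
    have := le_max_left (V t - u t) 0
    linarith [le_trans this hp0]
  -- final comparison
  intro t ht
  rw [hV t ht, hV₀ t ht]
  apply add_le_add_left
  have hI1 : IntervalIntegrable
      (fun s => (c s + lam * f (V s)) * Real.exp (-(r + lam) * (s - t)))
      MeasureTheory.volume t T := by
    apply ContinuousOn.intervalIntegrable
    apply ContinuousOn.mul
    · exact hc.continuousOn.add (continuousOn_const.mul
        (hfV_cont.mono (by rw [huIcc t ht]; exact hsub t ht)))
    · exact (Real.continuous_exp.comp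
        (continuous_const.mul (continuous_id.sub continuous_const))).continuousOn
  have hI2 : IntervalIntegrable
      (fun s => (c s + lam * f (U s)) * Real.exp (-(r + lam) * (s - t)))
      MeasureTheory.volume t T := by
    apply ContinuousOn.intervalIntegrable
    apply ContinuousOn.mul
    · apply hc.continuousOn.add
      apply continuousOn_const.mul
      have : ContinuousOn (fun s => f (u s)) (uIcc t T) :=
        (hf.continuous.comp hu_cont).continuousOn
      apply this.congr
      intro x hx
      show f (U x) = f (u x)
      rw [hUeq x (by rw [huIcc t ht] at hx; exact hsub t ht hx)]
    · exact (Real.continuous_exp.comp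
        (continuous_const.mul (continuous_id.sub continuous_const))).continuousOn
  apply intervalIntegral.integral_mono_on ht.2 hI1 hI2
  intro x hx
  have hxmem : x ∈ Icc (0:ℝ) T := hsub t ht hx
  have hVU : f (V x) ≤ f (U x) := by
    apply hmono
    rw [hUeq x hxmem]
    exact hVleu x hxmem
  have := mul_le_mul_of_nonneg_left hVU hlam
  have hE0 : 0 ≤ Real.exp (-(r + lam) * (x - t)) := (Real.exp_pos _).le
  apply mul_le_mul_of_nonneg_right _ hE0
  linarith
end

section
/- Let r, λ ≥ 0 with λ bounded by Λ, and f, g : ℝ → ℝ nondecreasing 1-Lipschitz functions with f(y) ≤ g(y) for all y. Let V_f, V_g be the unique continuous solutions on [0,T] of V(t) = ∫ₜ^T (c(s) + λ·h(V(s))) e^{-(r+λ)(s-t)} ds + e^{-(r+λ)(T-t)} φ with h = f and h = g respectively (c continuous, φ ∈ ℝ). Then V_f(t) ≤ V_g(t) for all t ∈ [0,T]. -/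
open Set

theorem stmt_15 (T r lam Λ : ℝ) (hT : 0 ≤ T) (hr : 0 ≤ r) (hlam : 0 ≤ lam) (hΛ : lam ≤ Λ)
    (c : ℝ → ℝ) (hc : Continuous c) (φ : ℝ)
    (f g : ℝ → ℝ) (hfmono : Monotone f) (hgmono : Monotone g)
    (hflip : LipschitzWith 1 f) (hglip : LipschitzWith 1 g)
    (hfg : ∀ y : ℝ, f y ≤ g y)
    (Vf Vg : ℝ → ℝ)
    (hVfcont : ContinuousOn Vf (Icc 0 T)) (hVgcont : ContinuousOn Vg (Icc 0 T))
    (hVf : ∀ t ∈ Icc (0:ℝ) T,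
      Vf t = (∫ s in t..T, (c s + lam * f (Vf s)) * Real.exp (-(r + lam) * (s - t)))
          + Real.exp (-(r + lam) * (T - t)) * φ)
    (hVg : ∀ t ∈ Icc (0:ℝ) T,
      Vg t = (∫ s in t..T, (c s + lam * g (Vg s)) * Real.exp (-(r + lam) * (s - t)))
          + Real.exp (-(r + lam) * (T - t)) * φ) :
    ∀ t ∈ Icc (0:ℝ) T, Vf t ≤ Vg t := by
  have hμ0 : 0 ≤ r + lam := add_nonneg hr hlam
  set M : ℝ → ℝ := fun t => max (Vf t - Vg t) 0 with hMdef
  have hMnn : ∀ t, 0 ≤ M t := fun t => le_max_right _ _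
  have hMcont : ContinuousOn M (Icc 0 T) :=
    (hVfcont.sub hVgcont).sup continuousOn_const
  -- a uniform bound K on M over [0,T]
  obtain ⟨x₀, hx₀, hKmax⟩ :=
    isCompact_Icc.exists_isMaxOn (nonempty_Icc.2 hT) hMcont
  set K := M x₀ with hKdef
  have hK0 : 0 ≤ K := hMnn x₀
  have hKbd : ∀ t ∈ Icc (0:ℝ) T, M t ≤ K := fun t ht => hKmax ht
  -- key integral inequality
  have key : ∀ t ∈ Icc (0:ℝ) T, M t ≤ ∫ s in t..T, lam * M s := by
    intro t ht
    have htT : t ≤ T := ht.2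
    have hsub : Icc t T ⊆ Icc 0 T := Icc_subset_Icc ht.1 le_rfl
    have huIcc : uIcc t T = Icc t T := uIcc_of_le htT
    have hsub' : uIcc t T ⊆ Icc 0 T := by rw [huIcc]; exact hsub
    have hVfc : ContinuousOn Vf (uIcc t T) := hVfcont.mono hsub'
    have hVgc : ContinuousOn Vg (uIcc t T) := hVgcont.mono hsub'
    have hexpc : Continuous fun s : ℝ => Real.exp (-(r + lam) * (s - t)) := by continuity
    have hif : IntervalIntegrable
        (fun s => (c s + lam * f (Vf s)) * Real.exp (-(r + lam) * (s - t)))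
        MeasureTheory.volume t T := by
      apply ContinuousOn.intervalIntegrable
      exact ((hc.continuousOn.add
        (continuousOn_const.mul (hflip.continuous.comp_continuousOn hVfc))).mul
        hexpc.continuousOn)
    have hig : IntervalIntegrable
        (fun s => (c s + lam * g (Vg s)) * Real.exp (-(r + lam) * (s - t)))
        MeasureTheory.volume t T := by
      apply ContinuousOn.intervalIntegrable
      exact ((hc.continuousOn.add
        (continuousOn_const.mul (hglip.continuous.comp_continuousOn hVgc))).mul
        hexpc.continuousOn)
    have hid : IntervalIntegrable
        (fun s => (lam * (f (Vf s) - g (Vg s))) * Real.exp (-(r + lam) * (s - t)))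
        MeasureTheory.volume t T := by
      apply ContinuousOn.intervalIntegrable
      exact ((continuousOn_const.mul
        ((hflip.continuous.comp_continuousOn hVfc).sub
          (hglip.continuous.comp_continuousOn hVgc))).mul hexpc.continuousOn)
    have hiM : IntervalIntegrable (fun s => lam * M s) MeasureTheory.volume t T := by
      apply ContinuousOn.intervalIntegrable
      exact continuousOn_const.mul (hMcont.mono hsub')
    have hdiff : Vf t - Vg t
        = ∫ s in t..T, (lam * (f (Vf s) - g (Vg s))) * Real.exp (-(r + lam) * (s - t)) := by
      have h2 : (∫ s in t..T, (c s + lam * f (Vf s)) * Real.exp (-(r + lam) * (s - t)))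
          - (∫ s in t..T, (c s + lam * g (Vg s)) * Real.exp (-(r + lam) * (s - t)))
          = ∫ s in t..T, (lam * (f (Vf s) - g (Vg s))) * Real.exp (-(r + lam) * (s - t)) := by
        rw [← intervalIntegral.integral_sub hif hig]
        congr 1
        funext s
        ring
      rw [hVf t ht, hVg t ht]
      linarith [h2]
    have hmono : (∫ s in t..T, (lam * (f (Vf s) - g (Vg s))) * Real.exp (-(r + lam) * (s - t)))
        ≤ ∫ s in t..T, lam * M s := by
      apply intervalIntegral.integral_mono_on htT hid hiM
      intro s hs
      have hX : f (Vf s) - g (Vg s) ≤ M s := by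
        rcases le_total (Vf s) (Vg s) with h | h
        · have h1 : f (Vf s) ≤ f (Vg s) := hfmono h
          have h2 : f (Vg s) ≤ g (Vg s) := hfg _
          have := hMnn s
          linarith
        · have h1 : f (Vf s) - f (Vg s) ≤ Vf s - Vg s := by
            have := hflip.dist_le_mul (Vf s) (Vg s)
            rw [Real.dist_eq, Real.dist_eq] at this
            have habs := le_abs_self (f (Vf s) - f (Vg s))
            have : |f (Vf s) - f (Vg s)| ≤ |Vf s - Vg s| := by simpa using this
            rw [abs_of_nonneg (by linarith : (0:ℝ) ≤ Vf s - Vg s)] at this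
            linarith
          have h2 : f (Vg s) ≤ g (Vg s) := hfg _
          have h3 : Vf s - Vg s ≤ M s := le_max_left _ _
          linarith
      have hexp_pos : 0 < Real.exp (-(r + lam) * (s - t)) := Real.exp_pos _
      have hexp_le : Real.exp (-(r + lam) * (s - t)) ≤ 1 := by
        apply Real.exp_le_one_iff.2
        have : 0 ≤ s - t := by linarith [hs.1]
        nlinarith
      have hMs := hMnn s
      rcases le_total (f (Vf s) - g (Vg s)) 0 with hneg | hpos
      · have : lam * (f (Vf s) - g (Vg s)) * Real.exp (-(r + lam) * (s - t)) ≤ 0 :=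
          mul_nonpos_of_nonpos_of_nonneg (mul_nonpos_of_nonneg_of_nonpos hlam hneg)
            hexp_pos.le
        have : (0:ℝ) ≤ lam * M s := mul_nonneg hlam hMs
        nlinarith [mul_nonpos_of_nonpos_of_nonneg (mul_nonpos_of_nonneg_of_nonpos hlam hneg) hexp_pos.le]
      · have h1 : lam * (f (Vf s) - g (Vg s)) * Real.exp (-(r + lam) * (s - t))
            ≤ lam * (f (Vf s) - g (Vg s)) * 1 :=
          mul_le_mul_of_nonneg_left hexp_le (mul_nonneg hlam hpos)
        have h2 : lam * (f (Vf s) - g (Vg s)) ≤ lam * M s :=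
          mul_le_mul_of_nonneg_left hX hlam
        linarith
    have hint_nn : (0:ℝ) ≤ ∫ s in t..T, lam * M s :=
      intervalIntegral.integral_nonneg htT (fun s _ => mul_nonneg hlam (hMnn s))
    have : Vf t - Vg t ≤ ∫ s in t..T, lam * M s := by rw [hdiff]; exact hmono
    exact max_le this hint_nn
  -- iteration: M t ≤ K * (lam*(T-t))^n / n!
  have ind : ∀ n : ℕ, ∀ t ∈ Icc (0:ℝ) T, M t ≤ K * (lam * (T - t))^n / n.factorial := by
    intro n
    induction n with
    | zero => intro t ht; simpa using hKbd t ht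
    | succ n ih =>
      intro t ht
      have htT : t ≤ T := ht.2
      have hsub : Icc t T ⊆ Icc 0 T := Icc_subset_Icc ht.1 le_rfl
      have hsub' : uIcc t T ⊆ Icc 0 T := by rw [uIcc_of_le htT]; exact hsub
      have hiM : IntervalIntegrable (fun s => lam * M s) MeasureTheory.volume t T := by
        apply ContinuousOn.intervalIntegrable
        exact continuousOn_const.mul (hMcont.mono hsub')
      have hiP : IntervalIntegrable
          (fun s => (lam^(n+1) * K / n.factorial) * (T - s)^n) MeasureTheory.volume t T := by
        apply ContinuousOn.intervalIntegrable
        exact (continuous_const.mul ((continuous_const.sub continuous_id).pow n)).continuousOn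
      have step1 : (∫ s in t..T, lam * M s)
          ≤ ∫ s in t..T, (lam^(n+1) * K / n.factorial) * (T - s)^n := by
        apply intervalIntegral.integral_mono_on htT hiM hiP
        intro s hs
        have hsmem : s ∈ Icc (0:ℝ) T := hsub ⟨hs.1, hs.2⟩
        have h1 := mul_le_mul_of_nonneg_left (ih s hsmem) hlam
        calc lam * M s ≤ lam * (K * (lam * (T - s))^n / n.factorial) := h1
          _ = (lam^(n+1) * K / n.factorial) * (T - s)^n := by
              simp only [mul_pow]; ring
      have hval : (∫ s in t..T, (lam^(n+1) * K / n.factorial) * (T - s)^n)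
          = K * (lam * (T - t))^(n+1) / (n+1).factorial := by
        rw [intervalIntegral.integral_const_mul]
        have hsub2 : (∫ s in t..T, (T - s)^n) = (T - t)^(n+1) / (n+1) := by
          have hcs := intervalIntegral.integral_comp_sub_left (a := t) (b := T)
            (fun u : ℝ => u ^ n) T
          rw [hcs, sub_self, integral_pow]
          simp
        rw [hsub2]
        rw [Nat.factorial_succ]
        push_cast
        simp only [mul_pow]
        field_simp
      have := key t ht
      calc M t ≤ ∫ s in t..T, lam * M s := key t ht
        _ ≤ ∫ s in t..T, (lam^(n+1) * K / n.factorial) * (T - s)^n := step1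
        _ = K * (lam * (T - t))^(n+1) / (n+1).factorial := hval
  -- conclude
  intro t ht
  have hlim : Filter.Tendsto (fun n : ℕ => K * ((lam * (T - t))^n / n.factorial))
      Filter.atTop (nhds 0) := by
    simpa using (FloorSemiring.tendsto_pow_div_factorial_atTop (lam * (T - t))).const_mul K
  have hM0 : M t ≤ 0 := by
    refine ge_of_tendsto' hlim fun n => ?_
    have := ind n t ht
    rw [mul_div_assoc] at this
    exact this
  have := le_max_left (Vf t - Vg t) 0
  linarith [hM0, le_max_left (Vf t - Vg t) 0]
end
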